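/- Let ε ∈ (0,1) and let f : (0,∞) → ℝ be convex with f(1) = f'(1) = 0 and thrice continuously differentiable on (1−ε, 1+ε). Let m, M be real numbers with 1 − ε/2 ≤ m < 1 < M ≤ 1 + ε/2, and set C := sup_{x ∈ [1−ε/2, 1+ε/2]} |f'''(x)|. Then f(m)/(1−m) + f(M)/(M−1) ≤ (f''(1)/2)·(M − m) + (C/6)·((M−1)² + (1−m)²). -/

import Mathlib

open Matrix Filter MeasureTheory
open scoped BigOperators ENNReal Classical ComplexOrder

noncomputable section

/-- The space of `d × d` complex matrices. -/
abbrev Mat (d : ℕ) := Matrix (Fin d) (Fin d) ℂ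

namespace QIT

variable {d : ℕ}

/-- A density matrix: positive semidefinite with unit trace. -/
def IsDensity (ρ : Mat d) : Prop := ρ.PosSemidef ∧ ρ.trace = 1

/-- The induced map `id_k ⊗ E` on `(k*d) × (k*d)` matrices. -/
def ampMap (E : Mat d → Mat d) (k : ℕ)
    (M : Matrix (Fin k × Fin d) (Fin k × Fin d) ℂ) :
    Matrix (Fin k × Fin d) (Fin k × Fin d) ℂ :=
  Matrix.of fun p q => E (Matrix.of fun i j => M (p.1, i) (q.1, j)) p.2 q.2

/-- A quantum channel: linear, completely positive and trace preserving. -/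
def IsChannel (E : Mat d → Mat d) : Prop :=
  IsLinearMap ℂ E ∧
  (∀ (k : ℕ) (M : Matrix (Fin k × Fin d) (Fin k × Fin d) ℂ),
      M.PosSemidef → (ampMap E k M).PosSemidef) ∧
  (∀ A : Mat d, (E A).trace = A.trace)

/-- A primitive channel: some iterate sends every density matrix to a positive definite one. -/
def Primitive (E : Mat d → Mat d) : Prop :=
  IsChannel E ∧ ∃ n : ℕ, ∀ ρ : Mat d, IsDensity ρ → (E^[n] ρ).PosDef

/-- The positive semidefinite square root of a positive semidefinite matrix
(the former `Matrix.PosSemidef.sqrt`). -/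
def psdSqrt {A : Mat d} (hA : A.PosSemidef) : Mat d :=
  (hA.1.eigenvectorUnitary : Mat d) * Matrix.diagonal ((↑) ∘ Real.sqrt ∘ hA.1.eigenvalues) *
    (star hA.1.eigenvectorUnitary : Mat d)

/-- Trace norm `‖A‖₁ = Tr √(Aᴴ A)`. -/
def traceNorm (A : Mat d) : ℝ :=
  ((psdSqrt (Matrix.posSemidef_conjTranspose_mul_self A)).trace).re

/-- Operator norm (largest singular value). -/
def opNorm (A : Mat d) : ℝ := ‖Matrix.toEuclideanCLM (𝕜 := ℂ) A‖

/-- Frobenius (Hilbert–Schmidt) norm. -/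
def frobNorm (A : Mat d) : ℝ := Real.sqrt ((Aᴴ * A).trace.re)

/-- Hilbert–Schmidt inner product `⟨A, B⟩ = Tr[Aᴴ B]`. -/
def hsInner (A B : Mat d) : ℂ := (Aᴴ * B).trace

/-- Smallest eigenvalue of a Hermitian matrix. -/
def lambdaMin {A : Mat d} (hA : A.IsHermitian) : ℝ := ⨅ i, hA.eigenvalues i

/-- The `i`-th eigenvector of a Hermitian matrix, as a function. -/
def evec {A : Mat d} (hA : A.IsHermitian) (i : Fin d) : Fin d → ℂ :=
  ⇑(hA.eigenvectorBasis i)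

/-- Inverse of the positive square root of a positive definite matrix. -/
def invSqrt {σ : Mat d} (hσ : σ.PosDef) : Mat d := (psdSqrt hσ.posSemidef)⁻¹

/-- `f` applied to a Hermitian matrix through the functional calculus. -/
def applyFn {k : ℕ} (f : ℝ → ℝ) {A : Matrix (Fin k) (Fin k) ℂ} (hA : A.IsHermitian) :
    Matrix (Fin k) (Fin k) ℂ :=
  ∑ i, (f (hA.eigenvalues i) : ℂ) •
    Matrix.vecMulVec (⇑(hA.eigenvectorBasis i)) (star ⇑(hA.eigenvectorBasis i))

/-- A standard monotone function: operator monotone decreasing, normalized, symmetry-inducing. -/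
def StdMonotone (g : ℝ → ℝ) : Prop :=
  (∀ (k : ℕ) (A B : Matrix (Fin k) (Fin k) ℂ) (hA : A.PosDef) (hB : B.PosDef),
      (B - A).PosSemidef → (applyFn g hA.1 - applyFn g hB.1).PosSemidef) ∧
  g 1 = 1 ∧
  (∀ x : ℝ, 0 < x → x * g x⁻¹ = g x)

/-- Operator convexity of `f : (0,∞) → ℝ`. -/
def OperatorConvex (f : ℝ → ℝ) : Prop :=
  ∀ (k : ℕ) (A B : Matrix (Fin k) (Fin k) ℂ) (hA : A.PosDef) (hB : B.PosDef)
    (t : ℝ), t ∈ Set.Icc (0:ℝ) 1 →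
    ∀ hC : (t • A + (1 - t) • B).IsHermitian,
      (t • applyFn f hA.1 + (1 - t) • applyFn f hB.1 - applyFn f hC).PosSemidef

/-- Coefficients `μ_j⁻¹ g(μ_i/μ_j)` of the non-commutative division map `Ω_σ^g`. -/
def omegaCoeff (g : ℝ → ℝ) {σ : Mat d} (hσ : σ.IsHermitian) (i j : Fin d) : ℝ :=
  (hσ.eigenvalues j)⁻¹ * g (hσ.eigenvalues i / hσ.eigenvalues j)

/-- The linear map on matrices acting by multiplication with coefficients `c i j`
in the eigenbasis of `σ`. -/
def modMap {σ : Mat d} (hσ : σ.IsHermitian) (c : Fin d → Fin d → ℝ) (X : Mat d) : Mat d :=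
  ∑ i, ∑ j, ((c i j : ℂ) * (star (evec hσ i) ⬝ᵥ (X *ᵥ evec hσ j))) •
    Matrix.vecMulVec (evec hσ i) (star (evec hσ j))

/-- The quantum inversion `Ω_σ^g`. -/
def Omega (g : ℝ → ℝ) {σ : Mat d} (hσ : σ.IsHermitian) : Mat d → Mat d :=
  modMap hσ (omegaCoeff g hσ)

/-- The inverse `(Ω_σ^g)⁻¹` of the quantum inversion. -/
def OmegaInv (g : ℝ → ℝ) {σ : Mat d} (hσ : σ.IsHermitian) : Mat d → Mat d :=
  modMap hσ fun i j => (omegaCoeff g hσ i j)⁻¹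

/-- `Es` is the adjoint of `E` with respect to the Hilbert–Schmidt inner product. -/
def IsHSAdjoint (E Es : Mat d → Mat d) : Prop :=
  ∀ A B : Mat d, hsInner (Es A) B = hsInner A (E B)

/-- `g`-detailed balance with respect to `σ`: `(Ω_σ^g)⁻¹ ∘ E* = E ∘ (Ω_σ^g)⁻¹`. -/
def DetailedBalance (g : ℝ → ℝ) {σ : Mat d} (hσ : σ.IsHermitian) (E : Mat d → Mat d) : Prop :=
  ∀ Es : Mat d → Mat d, IsHSAdjoint E Es →
    ∀ X : Mat d, OmegaInv g hσ (Es X) = E (OmegaInv g hσ X)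

/-- The quantum `χ²_g`-divergence `χ²_g(ρ‖σ) = Σ_{i,j} μ_j⁻¹ g(μ_i/μ_j) |v_iᴴ(ρ-σ)v_j|²`. -/
def chi2 (g : ℝ → ℝ) (ρ : Mat d) {σ : Mat d} (hσ : σ.IsHermitian) : ℝ :=
  ∑ i, ∑ j, omegaCoeff g hσ i j * ‖star (evec hσ i) ⬝ᵥ ((ρ - σ) *ᵥ evec hσ j)‖ ^ 2

/-- The quantum `χ²_g`-divergence as an `ℝ≥0∞`-valued divergence. -/
def chi2D (g : ℝ → ℝ) (ρ σ : Mat d) : ℝ≥0∞ :=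
  if hσ : σ.IsHermitian then ENNReal.ofReal (chi2 g ρ hσ) else 0

/-- SDPI constant of a channel `E` with respect to a reference state `σ`, for a divergence `D`. -/
def eta (D : Mat d → Mat d → ℝ≥0∞) (E : Mat d → Mat d) (σ : Mat d) : ℝ≥0∞ :=
  ⨆ ρ : {ρ : Mat d // IsDensity ρ ∧ 0 < D ρ σ ∧ D ρ σ ≠ ⊤}, D (E ρ.1) (E σ) / D ρ.1 σ

/-- Extension of `f` to `[0,∞)` with values in `[0,∞]`, with `f(0) := lim_{x↓0} f(x)`. -/
def fExt (f : ℝ → ℝ) (x : ℝ) : ℝ≥0∞ :=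
  if 0 < x then ENNReal.ofReal (f x)
  else Filter.limsup (fun t : ℝ => ENNReal.ofReal (f t)) (nhdsWithin 0 (Set.Ioi 0))

/-- A quantum `f`-divergence: satisfies data processing and classical consistency. -/
structure IsQFDiv (f : ℝ → ℝ) (D : Mat d → Mat d → ℝ≥0∞) : Prop where
  dpi : ∀ E : Mat d → Mat d, IsChannel E → ∀ ρ σ : Mat d, IsDensity ρ → IsDensity σ →
    D (E ρ) (E σ) ≤ D ρ σ
  classical_consistency : ∀ ρ σ : Mat d, IsDensity ρ → IsDensity σ → σ.PosDef →
    ρ * σ = σ * ρ →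
    ∀ (p q : Fin d → ℝ) (v : Fin d → (Fin d → ℂ)),
      (∀ i j, star (v i) ⬝ᵥ v j = if i = j then 1 else 0) →
      ρ = ∑ i, (p i : ℂ) • Matrix.vecMulVec (v i) (star (v i)) →
      σ = ∑ i, (q i : ℂ) • Matrix.vecMulVec (v i) (star (v i)) →
      D ρ σ = ∑ i, ENNReal.ofReal (q i) * fExt f (p i / q i)

/-- `D` satisfies a quantum Pinsker inequality. -/
def QPinsker (D : Mat d → Mat d → ℝ≥0∞) : Prop :=
  ∃ C : ℝ, 0 < C ∧ ∀ ρ σ : Mat d, IsDensity ρ → IsDensity σ →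
    ENNReal.ofReal (C * traceNorm (ρ - σ) ^ 2) ≤ D ρ σ

/-- Basic regularity hypotheses on `f` for a quantum `f`-divergence. -/
structure FBase (f : ℝ → ℝ) : Prop where
  convex : ConvexOn ℝ (Set.Ioi 0) f
  smooth : ContDiffOn ℝ 2 f (Set.Ioi 0)
  one : f 1 = 0
  deriv_one : deriv f 1 = 0

/-- `f` is thrice continuously differentiable in an open neighborhood of `1`. -/
def ThriceNearOne (f : ℝ → ℝ) : Prop :=
  ∃ ε : ℝ, 0 < ε ∧ ContDiffOn ℝ 3 f (Set.Ioo (1 - ε) (1 + ε))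

/-- `𝔻_f` is locally `χ²_g`. -/
def LocallyChi2 (f : ℝ → ℝ) (D : Mat d → Mat d → ℝ≥0∞) (g : ℝ → ℝ) : Prop :=
  ∀ ρ σ : Mat d, IsDensity ρ → IsDensity σ → ρ.PosDef →
    ∀ hσ : σ.PosDef,
      Filter.Tendsto (fun lam : ℝ => D (lam • ρ + (1 - lam) • σ) σ / ENNReal.ofReal (lam ^ 2))
        (nhdsWithin 0 (Set.Ioi 0))
        (nhds (ENNReal.ofReal (deriv (deriv f) 1 / 2 * chi2 g ρ hσ.1)))

/-- Trace of the positive part of a Hermitian matrix. -/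
def trPos (A : Mat d) : ℝ :=
  if hA : A.IsHermitian then ∑ i, max (hA.eigenvalues i) 0 else 0

/-- Quantum hockey-stick divergence `E_γ(ρ‖σ) = Tr[(ρ - γσ)₊]`. -/
def hockey (γ : ℝ) (ρ σ : Mat d) : ℝ := trPos (ρ - (γ : ℂ) • σ)

/-- The Hirche–Tomamichel `f`-divergence. -/
def htDiv (f : ℝ → ℝ) (ρ σ : Mat d) : ℝ≥0∞ :=
  ∫⁻ γ in Set.Ioi (1 : ℝ),
    ENNReal.ofReal (deriv (deriv f) γ * hockey γ ρ σ
      + (γ⁻¹) ^ 3 * deriv (deriv f) γ⁻¹ * hockey γ σ ρ)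

/-- The Matsumoto (maximal) `f`-divergence `Tr[σ f(σ^{-1/2} ρ σ^{-1/2})]`. -/
def matsumoto (f : ℝ → ℝ) (ρ : Mat d) {σ : Mat d} (hσ : σ.PosDef) : ℝ≥0∞ :=
  if hA : (invSqrt hσ * ρ * invSqrt hσ).IsHermitian then
    ∑ i, fExt f (hA.eigenvalues i) *
      ENNReal.ofReal ((star (evec hA i) ⬝ᵥ (σ *ᵥ evec hA i)).re)
  else 0

/-- The Matsumoto `f`-divergence as a total `ℝ≥0∞`-valued divergence. -/
def matsumotoD (f : ℝ → ℝ) (ρ σ : Mat d) : ℝ≥0∞ :=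
  if hσ : σ.PosDef then matsumoto f ρ hσ else 0

/-- The Petz `f`-divergence `Σ_{i,j} μ_j f(λ_i/μ_j) |u_iᴴ v_j|²`. -/
def petzD (f : ℝ → ℝ) (ρ σ : Mat d) : ℝ≥0∞ :=
  if h : ρ.IsHermitian ∧ σ.IsHermitian then
    ∑ i, ∑ j, ENNReal.ofReal (h.2.eigenvalues j) * fExt f (h.1.eigenvalues i / h.2.eigenvalues j)
      * ENNReal.ofReal (‖star (evec h.1 i) ⬝ᵥ evec h.2 j‖ ^ 2)
  else 0

section TaylorAux
open Set

lemma aux_taylor {s : Set ℝ} (hs : IsOpen s) {f : ℝ → ℝ} (hf : ContDiffOn ℝ 3 f s)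
    {a b : ℝ} (hab : a < b) (hsub : Set.Icc a b ⊆ s) {C : ℝ}
    (hC : ∀ y ∈ Set.Icc a b, |deriv (deriv (deriv f)) y| ≤ C) :
    f b ≤ f a + deriv f a * (b - a) + deriv (deriv f) a / 2 * (b - a) ^ 2
      + C / 6 * (b - a) ^ 3 := by
  have hu := uniqueDiffOn_Icc hab
  have hd1 : ∀ x ∈ Icc a b, DifferentiableAt ℝ f x := fun x hx =>
    ((hf.differentiableOn (by norm_num)).differentiableAt (hs.mem_nhds (hsub hx)))
  have hf' : ContDiffOn ℝ 2 (deriv f) s := hf.deriv_of_isOpen hs (by norm_num)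
  have hd2 : ∀ x ∈ Icc a b, DifferentiableAt ℝ (deriv f) x := fun x hx =>
    ((hf'.differentiableOn (by norm_num)).differentiableAt (hs.mem_nhds (hsub hx)))
  have hf'' : ContDiffOn ℝ 1 (deriv (deriv f)) s := hf'.deriv_of_isOpen hs (by norm_num)
  have hd3 : ∀ x ∈ Icc a b, DifferentiableAt ℝ (deriv (deriv f)) x := fun x hx =>
    ((hf''.differentiableOn (by norm_num)).differentiableAt (hs.mem_nhds (hsub hx)))
  have eq1 : ∀ x ∈ Icc a b, iteratedDerivWithin 1 f (Icc a b) x = deriv f x := by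
    intro x hx
    rw [iteratedDerivWithin_one]
    exact (hd1 x hx).derivWithin (hu x hx)
  have eq2 : ∀ x ∈ Icc a b, iteratedDerivWithin 2 f (Icc a b) x = deriv (deriv f) x := by
    intro x hx
    rw [iteratedDerivWithin_succ, derivWithin_congr eq1 (eq1 x hx)]
    exact (hd2 x hx).derivWithin (hu x hx)
  have eq3 : ∀ x ∈ Icc a b, iteratedDerivWithin 3 f (Icc a b) x
      = deriv (deriv (deriv f)) x := by
    intro x hx
    rw [iteratedDerivWithin_succ, derivWithin_congr eq2 (eq2 x hx)]
    exact (hd3 x hx).derivWithin (hu x hx)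
  have hdiff : DifferentiableOn ℝ (iteratedDerivWithin 2 f (Icc a b)) (Ioo a b) := by
    intro x hx
    have hx' : x ∈ Icc a b := Ioo_subset_Icc_self hx
    exact ((hd3 x hx').differentiableWithinAt).congr
      (fun y hy => eq2 y (Ioo_subset_Icc_self hy)) (eq2 x hx')
  have hI : uIcc a b = Icc a b := uIcc_of_le hab.le
  have hO : uIoo a b = Ioo a b := uIoo_of_le hab.le
  obtain ⟨ξ, hξ, heq⟩ := taylor_mean_remainder_lagrange (n := 2) hab.ne
    (by rw [hI]; exact ((hf.of_le (by norm_num)).mono hsub)) (by rw [hI, hO]; exact hdiff)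
  rw [hI] at heq
  rw [hO] at hξ
  have htay : taylorWithinEval f 2 (Icc a b) a b
      = f a + deriv f a * (b - a) + deriv (deriv f) a / 2 * (b - a) ^ 2 := by
    rw [taylor_within_apply]
    simp [Finset.sum_range_succ, iteratedDerivWithin_zero,
      eq1 a (left_mem_Icc.mpr hab.le), eq2 a (left_mem_Icc.mpr hab.le)]
    ring
  rw [htay, eq3 ξ (Ioo_subset_Icc_self hξ)] at heq
  have hbd := hC ξ (Ioo_subset_Icc_self hξ)
  have h3 : (0:ℝ) ≤ (b - a) ^ 3 := pow_nonneg (by linarith) 3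
  have habs := abs_le.mp hbd
  norm_num [Nat.factorial] at heq
  nlinarith [mul_le_mul_of_nonneg_right habs.2 h3]

end TaylorAux

/-- Taylor-expansion bound on `f(m)/(1−m) + f(M)/(M−1)` near `1`. -/
theorem taylor_bound_near_one (ε : ℝ) (hε : ε ∈ Set.Ioo (0:ℝ) 1)
    (f : ℝ → ℝ) (hconv : ConvexOn ℝ (Set.Ioi 0) f)
    (hsm : ContDiffOn ℝ 2 f (Set.Ioi 0))
    (hf1 : f 1 = 0) (hf'1 : deriv f 1 = 0)
    (hf3 : ContDiffOn ℝ 3 f (Set.Ioo (1 - ε) (1 + ε)))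
    (m M : ℝ) (hm : 1 - ε / 2 ≤ m) (hm1 : m < 1) (hM1 : 1 < M) (hM : M ≤ 1 + ε / 2)
    (C : ℝ)
    (hC : C = sSup ((fun x => |deriv (deriv (deriv f)) x|) '' Set.Icc (1 - ε / 2) (1 + ε / 2))) :
    f m / (1 - m) + f M / (M - 1) ≤
      deriv (deriv f) 1 / 2 * (M - m) + C / 6 * ((M - 1) ^ 2 + (1 - m) ^ 2) := by
  obtain ⟨hε0, hε1⟩ := hε
  have hIopen : IsOpen (Set.Ioo (1 - ε) (1 + ε)) := isOpen_Ioo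
  have hIccI : Set.Icc (1 - ε / 2) (1 + ε / 2) ⊆ Set.Ioo (1 - ε) (1 + ε) := by
    intro x hx; exact ⟨by linarith [hx.1], by linarith [hx.2]⟩
  -- continuity of the third derivative on the closed interval
  have h3c : ContinuousOn (deriv (deriv (deriv f))) (Set.Ioo (1 - ε) (1 + ε)) := by
    have h1 : ContDiffOn ℝ 2 (deriv f) (Set.Ioo (1 - ε) (1 + ε)) :=
      hf3.deriv_of_isOpen hIopen (by norm_num)
    have h2 : ContDiffOn ℝ 1 (deriv (deriv f)) (Set.Ioo (1 - ε) (1 + ε)) :=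
      h1.deriv_of_isOpen hIopen (by norm_num)
    exact h2.continuousOn_deriv_of_isOpen hIopen (by norm_num)
  have habsc : ContinuousOn (fun x => |deriv (deriv (deriv f)) x|)
      (Set.Icc (1 - ε / 2) (1 + ε / 2)) :=
    (continuous_abs.comp_continuousOn (h3c.mono hIccI))
  have hbdd : BddAbove ((fun x => |deriv (deriv (deriv f)) x|) ''
      Set.Icc (1 - ε / 2) (1 + ε / 2)) :=
    (isCompact_Icc.image_of_continuousOn habsc).bddAbove
  have hCge : ∀ y ∈ Set.Icc (1 - ε / 2) (1 + ε / 2), |deriv (deriv (deriv f)) y| ≤ C := by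
    intro y hy
    rw [hC]
    exact le_csSup hbdd (Set.mem_image_of_mem _ hy)
  -- the M side
  have hMside : f M / (M - 1) ≤ deriv (deriv f) 1 / 2 * (M - 1) + C / 6 * (M - 1) ^ 2 := by
    have hsub : Set.Icc 1 M ⊆ Set.Ioo (1 - ε) (1 + ε) := fun x hx =>
      hIccI ⟨by linarith [hx.1], by linarith [hx.2]⟩
    have hCb : ∀ y ∈ Set.Icc 1 M, |deriv (deriv (deriv f)) y| ≤ C := fun y hy =>
      hCge y ⟨by linarith [hy.1], by linarith [hy.2]⟩
    have := aux_taylor hIopen hf3 hM1 hsub hCb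
    rw [hf1, hf'1] at this
    rw [div_le_iff₀ (by linarith)]
    nlinarith [this]
  -- the m side, via reflection
  set g : ℝ → ℝ := fun x => f (2 - x) with hg
  have hmaps : Set.MapsTo (fun x : ℝ => 2 - x) (Set.Ioo (1 - ε) (1 + ε))
      (Set.Ioo (1 - ε) (1 + ε)) := by
    intro x hx
    simp only [Set.mem_Ioo] at hx ⊢
    constructor <;> linarith [hx.1, hx.2]
  have hgcd : ContDiffOn ℝ 3 g (Set.Ioo (1 - ε) (1 + ε)) :=
    hf3.comp ((contDiff_const.sub contDiff_id).contDiffOn) hmaps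
  have dg1 : deriv g = fun x => -deriv f (2 - x) := by
    funext x; exact deriv_comp_const_sub f 2 x
  have dg2 : deriv (deriv g) = fun x => deriv (deriv f) (2 - x) := by
    funext x
    rw [dg1]
    have : deriv (fun x : ℝ => -deriv f (2 - x)) x
        = -deriv (fun x : ℝ => deriv f (2 - x)) x := deriv.neg
    rw [this, deriv_comp_const_sub (deriv f) 2 x, neg_neg]
  have dg3 : deriv (deriv (deriv g)) = fun x => -deriv (deriv (deriv f)) (2 - x) := by
    funext x
    rw [dg2]
    exact deriv_comp_const_sub (deriv (deriv f)) 2 x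
  have hmside : f m / (1 - m) ≤ deriv (deriv f) 1 / 2 * (1 - m) + C / 6 * (1 - m) ^ 2 := by
    have hlt : (1:ℝ) < 2 - m := by linarith
    have hsub : Set.Icc 1 (2 - m) ⊆ Set.Ioo (1 - ε) (1 + ε) := fun x hx =>
      hIccI ⟨by linarith [hx.1], by linarith [hx.2]⟩
    have hCb : ∀ y ∈ Set.Icc 1 (2 - m), |deriv (deriv (deriv g)) y| ≤ C := by
      intro y hy
      rw [dg3]
      simp only [abs_neg]
      exact hCge (2 - y) ⟨by linarith [hy.2], by linarith [hy.1]⟩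
    have := aux_taylor hIopen hgcd hlt hsub hCb
    have hg1 : g 1 = 0 := by show f (2 - 1) = 0; norm_num [hf1]
    have hg'1 : deriv g 1 = 0 := by rw [dg1]; norm_num [hf'1]
    have hg''1 : deriv (deriv g) 1 = deriv (deriv f) 1 := by rw [dg2]; norm_num
    rw [hg1, hg'1, hg''1] at this
    have hgm : g (2 - m) = f m := by show f (2 - (2 - m)) = f m; norm_num
    rw [hgm] at this
    rw [div_le_iff₀ (by linarith)]
    nlinarith [this]
  linarith [hMside, hmside]

end QIT
end
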